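/- The exponential generating function of strongly connected digraphs has radius of convergence 0, but the sequence scd_n / 2^{n(n−1)} → 1 as n → ∞: the probability that a uniformly random labelled digraph on n vertices is strongly connected tends to 1. -/

import Mathlib

/-- A labelled digraph on `Fin n`: a set of ordered pairs `(u,v)` with `u ≠ v`. -/
abbrev Dgr (n : ℕ) := {f : Fin n → Fin n → Bool // ∀ v, f v v = false}

/-- Reachability in a digraph. -/
def Reach {n : ℕ} (D : Dgr n) : Fin n → Fin n → Prop :=
  Relation.ReflTransGen (fun a b => D.1 a b = true)

/-- The mutual-reachability equivalence relation. -/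
def sccSetoid {n : ℕ} (D : Dgr n) : Setoid (Fin n) where
  r u v := Reach D u v ∧ Reach D v u
  iseqv := ⟨fun _ => ⟨.refl, .refl⟩, fun h => ⟨h.2, h.1⟩,
    fun h1 h2 => ⟨h1.1.trans h2.1, h2.2.trans h1.2⟩⟩

/-- The strongly connected components of `D`. -/
def SCC {n : ℕ} (D : Dgr n) := Quotient (sccSetoid D)

/-- The number of strongly connected components of `D`. -/
noncomputable def sccCount {n : ℕ} (D : Dgr n) : ℕ := Nat.card (SCC D)

/-- `scd m` : the number of strongly connected labelled digraphs on `m` vertices. -/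
noncomputable def scd (m : ℕ) : ℕ := Nat.card {D : Dgr m // ∀ u v, Reach D u v}

/-!
A digraph that is not strongly connected has a nonempty proper vertex set `S` that no edge
leaves (the vertices reachable from one that does not reach everything), and the digraphs with
no edge leaving a given `S` with `#S = k` form a proportion `2^(-k(n-k))` of all of them. The
union bound over `S` bounds the proportion of digraphs that are not strongly connected by
`∑_{0<k<n} C(n,k) 2^(-k(n-k))`; by the symmetry `k ↔ n - k` each term is at most `n 2^(-n/2)`
once that is `≤ 1`, so the sum is `O(n² 2^(-n/2))`. For the divergence, `scd n / n! * r^n` is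
asymptotically `2^(n(n-1)) r^n / n! ≥ (2^(n-1) r / n)^n`, which tends to infinity.
-/

open Finset Filter Topology

section Counting

variable {n : ℕ}

def IsOutClosed (D : Dgr n) (S : Finset (Fin n)) : Prop :=
  ∀ a b, D.1 a b = true → a ∈ S → b ∈ S

def dgrEdgesSubsetEquiv (P : Fin n → Fin n → Prop) [DecidableRel P] :
    {D : Dgr n // ∀ a b, D.1 a b = true → P a b} ≃
      ({p : Fin n × Fin n // p.1 ≠ p.2 ∧ P p.1 p.2} → Bool) where
  toFun D p := D.1.1 p.1.1 p.1.2
  invFun g := ⟨⟨fun a b => if h : a ≠ b ∧ P a b then g ⟨(a, b), h⟩ else false,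
      fun v => by simp⟩, fun a b hab => by by_contra h; simp [h] at hab⟩
  left_inv D := by
    ext a b
    by_cases h : a ≠ b ∧ P a b
    · simp [h]
    · have hab : D.1.1 a b = false := by
        by_cases hab : a = b
        · exact hab ▸ D.1.2 a
        · exact Bool.eq_false_iff.mpr fun hD => h ⟨hab, D.2 a b hD⟩
      simp [h, hab]
  right_inv g := by funext p; simp [p.2]

theorem card_dgr_edges_subset (P : Fin n → Fin n → Prop) [DecidableRel P] :
    Nat.card {D : Dgr n // ∀ a b, D.1 a b = true → P a b} =
      2 ^ #{p : Fin n × Fin n | p.1 ≠ p.2 ∧ P p.1 p.2} := by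
  rw [Nat.card_congr (dgrEdgesSubsetEquiv P), Nat.card_eq_fintype_card, Fintype.card_fun,
    Fintype.card_bool, Fintype.card_subtype]

theorem card_fin_offDiag : #{p : Fin n × Fin n | p.1 ≠ p.2} = n * (n - 1) := by
  rw [show ({p | p.1 ≠ p.2} : Finset (Fin n × Fin n)) = univ.offDiag by ext; simp,
    offDiag_card, card_univ, Fintype.card_fin, Nat.mul_sub_one]

theorem card_fin_offDiag_not_leaving_add (S : Finset (Fin n)) :
    #{p : Fin n × Fin n | p.1 ≠ p.2 ∧ (p.1 ∈ S → p.2 ∈ S)} + #S * (n - #S) = n * (n - 1) := by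
  have h_leaving :
      ({p | p.1 ≠ p.2 ∧ ¬(p.1 ∈ S → p.2 ∈ S)} : Finset (Fin n × Fin n)) = S ×ˢ Sᶜ := by
    ext ⟨a, b⟩
    simp only [mem_filter, mem_univ, true_and, mem_product, mem_compl]
    constructor
    · rintro ⟨-, h⟩; tauto
    · rintro ⟨ha, hb⟩; exact ⟨fun h => hb (h ▸ ha), fun h => hb (h ha)⟩
  rw [← card_fin_offDiag, ← card_filter_add_card_filter_not
    (s := ({p | p.1 ≠ p.2} : Finset (Fin n × Fin n))) (fun p => p.1 ∈ S → p.2 ∈ S),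
    filter_filter, filter_filter, h_leaving, card_product, card_compl, Fintype.card_fin]

theorem card_dgr : Nat.card (Dgr n) = 2 ^ (n * (n - 1)) := by
  rw [← Nat.card_congr (Equiv.subtypeUnivEquiv (fun D : Dgr n => fun a b _ => trivial)),
    card_dgr_edges_subset (fun _ _ => True)]
  simpa using card_fin_offDiag

theorem card_isOutClosed_mul (S : Finset (Fin n)) :
    Nat.card {D : Dgr n // IsOutClosed D S} * 2 ^ (#S * (n - #S)) = 2 ^ (n * (n - 1)) := by
  rw [show Nat.card {D : Dgr n // IsOutClosed D S} = _ from
    card_dgr_edges_subset (fun a b => a ∈ S → b ∈ S), ← pow_add,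
    card_fin_offDiag_not_leaving_add]

theorem exists_isOutClosed_of_not_reach {D : Dgr n} {u v : Fin n} (h : ¬ Reach D u v) :
    ∃ S, IsOutClosed D S ∧ u ∈ S ∧ v ∉ S := by
  classical
  refine ⟨({w | Reach D u w} : Finset (Fin n)), fun a b hab ha => ?_,
    mem_filter.mpr ⟨mem_univ u, Relation.ReflTransGen.refl⟩,
    fun hv => h (mem_filter.mp hv).2⟩
  simp only [mem_filter, mem_univ, true_and] at ha ⊢
  exact ha.tail hab

theorem card_not_stronglyConnected_le :
    Nat.card {D : Dgr n // ¬ ∀ u v, Reach D u v} ≤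
      ∑ k ∈ Ico 1 n, ∑ S ∈ powersetCard k univ, Nat.card {D : Dgr n // IsOutClosed D S} := by
  classical
  simp only [Nat.card_eq_fintype_card, Fintype.card_subtype]
  calc #{D : Dgr n | ¬ ∀ u v, Reach D u v}
      ≤ #((Ico 1 n).biUnion fun k => (powersetCard k univ).biUnion fun S =>
          {D : Dgr n | IsOutClosed D S}) := by
        refine card_le_card fun D hD => ?_
        obtain ⟨u, v, huv⟩ : ∃ u v, ¬ Reach D u v := by simpa using hD
        obtain ⟨S, hS, hu, hv⟩ := exists_isOutClosed_of_not_reach huv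
        simp only [mem_biUnion, mem_Ico, mem_powersetCard, mem_filter]
        exact ⟨#S, ⟨card_pos.mpr ⟨u, hu⟩,
          (card_lt_univ_of_notMem hv).trans_eq (Fintype.card_fin n)⟩, S, ⟨subset_univ S, rfl⟩,
          mem_univ D, hS⟩
    _ ≤ _ := card_biUnion_le.trans (sum_le_sum fun k _ => card_biUnion_le)

end Counting

section Asymptotics

theorem choose_mul_sq_pow_le_of_two_mul_le {s : ℝ} (hs0 : 0 ≤ s) (hs1 : s ≤ 1) {n k : ℕ}
    (hk : 1 ≤ k) (h2k : 2 * k ≤ n) (hns : n * s ^ n ≤ 1) :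
    n.choose k * (s ^ 2) ^ (k * (n - k)) ≤ n * s ^ n := by
  have h_choose : (n.choose k : ℝ) ≤ (n : ℝ) ^ k := by exact_mod_cast n.choose_le_pow k
  have h_pow : (s ^ 2) ^ (k * (n - k)) ≤ (s ^ n) ^ k :=
    calc (s ^ 2) ^ (k * (n - k)) = (s ^ (2 * (n - k))) ^ k := by ring
      _ ≤ (s ^ n) ^ k :=
        pow_le_pow_left₀ (by positivity) (pow_le_pow_of_le_one hs0 hs1 (by omega)) k
  calc (n.choose k : ℝ) * (s ^ 2) ^ (k * (n - k))
      ≤ (n : ℝ) ^ k * (s ^ n) ^ k := mul_le_mul h_choose h_pow (by positivity) (by positivity)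
    _ = (n * s ^ n) ^ k := (mul_pow _ _ _).symm
    _ ≤ n * s ^ n := pow_le_of_le_one (by positivity) hns (by omega)

theorem choose_mul_sq_pow_le {s : ℝ} (hs0 : 0 ≤ s) (hs1 : s ≤ 1) {n k : ℕ}
    (hk : k ∈ Ico 1 n) (hns : n * s ^ n ≤ 1) :
    n.choose k * (s ^ 2) ^ (k * (n - k)) ≤ n * s ^ n := by
  obtain ⟨hk1, hkn⟩ := mem_Ico.mp hk
  rcases le_total (2 * k) n with h2k | h2k
  · exact choose_mul_sq_pow_le_of_two_mul_le hs0 hs1 hk1 h2k hns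
  · rw [← Nat.choose_symm hkn.le, show k * (n - k) = (n - k) * (n - (n - k)) by
      rw [Nat.sub_sub_self hkn.le, mul_comm]]
    exact choose_mul_sq_pow_le_of_two_mul_le hs0 hs1 (by omega) (by omega) hns

theorem tendsto_sum_choose_mul_pow_nhds_zero {q : ℝ} (hq0 : 0 ≤ q) (hq1 : q < 1) :
    Tendsto (fun n : ℕ => ∑ k ∈ Ico 1 n, (n.choose k : ℝ) * q ^ (k * (n - k))) atTop (𝓝 0) := by
  set s := √q
  have hs0 : 0 ≤ s := Real.sqrt_nonneg q
  have hs1 : s < 1 := (Real.sqrt_lt' one_pos).mpr (by simpa using hq1)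
  have hq : q = s ^ 2 := (Real.sq_sqrt hq0).symm
  have h_lin : Tendsto (fun n : ℕ => (n : ℝ) * s ^ n) atTop (𝓝 0) := by
    simpa using tendsto_pow_const_mul_const_pow_of_lt_one 1 hs0 hs1
  refine squeeze_zero' (Eventually.of_forall fun n => sum_nonneg fun k _ => by positivity) ?_
    (tendsto_pow_const_mul_const_pow_of_lt_one 2 hs0 hs1)
  filter_upwards [h_lin.eventually_le_const one_pos] with n hns
  calc ∑ k ∈ Ico 1 n, (n.choose k : ℝ) * q ^ (k * (n - k))
      ≤ ∑ _k ∈ Ico 1 n, (n : ℝ) * s ^ n :=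
        sum_le_sum fun k hk => hq ▸ choose_mul_sq_pow_le hs0 hs1.le hk hns
    _ ≤ n * (n * s ^ n) := by
        rw [sum_const, Nat.card_Ico, nsmul_eq_mul]
        gcongr
        exact_mod_cast n.sub_le 1
    _ = (n : ℝ) ^ 2 * s ^ n := by ring

end Asymptotics

section Density

variable {n : ℕ}

theorem card_isOutClosed_div (S : Finset (Fin n)) :
    (Nat.card {D : Dgr n // IsOutClosed D S} : ℝ) / 2 ^ (n * (n - 1)) =
      (1 / 2) ^ (#S * (n - #S)) := by
  have h : (Nat.card {D : Dgr n // IsOutClosed D S} : ℝ) * 2 ^ (#S * (n - #S)) =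
      2 ^ (n * (n - 1)) := by exact_mod_cast card_isOutClosed_mul S
  rw [div_eq_iff (by positivity), ← h, mul_comm, mul_assoc, ← mul_pow]
  norm_num

theorem card_not_stronglyConnected_div_le :
    (Nat.card {D : Dgr n // ¬ ∀ u v, Reach D u v} : ℝ) / 2 ^ (n * (n - 1)) ≤
      ∑ k ∈ Ico 1 n, (n.choose k : ℝ) * (1 / 2) ^ (k * (n - k)) := by
  calc (Nat.card {D : Dgr n // ¬ ∀ u v, Reach D u v} : ℝ) / 2 ^ (n * (n - 1))
      ≤ (∑ k ∈ Ico 1 n, ∑ S ∈ powersetCard k univ,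
          Nat.card {D : Dgr n // IsOutClosed D S} : ℕ) / 2 ^ (n * (n - 1)) := by
        gcongr
        exact card_not_stronglyConnected_le
    _ = ∑ k ∈ Ico 1 n, (n.choose k : ℝ) * (1 / 2) ^ (k * (n - k)) := by
        push_cast
        simp only [sum_div]
        refine sum_congr rfl fun k _ => ?_
        rw [sum_congr rfl fun S hS => by rw [card_isOutClosed_div, (mem_powersetCard.mp hS).2],
          sum_const, card_powersetCard, card_univ, Fintype.card_fin, nsmul_eq_mul]

theorem scd_add_card_not_stronglyConnected :
    scd n + Nat.card {D : Dgr n // ¬ ∀ u v, Reach D u v} = 2 ^ (n * (n - 1)) := by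
  classical
  rw [scd, ← card_dgr, Nat.card_eq_fintype_card, Nat.card_eq_fintype_card,
    Nat.card_eq_fintype_card, Fintype.card_subtype_compl,
    Nat.add_sub_cancel' (Fintype.card_subtype_le _)]

theorem tendsto_scd_div_two_pow :
    Tendsto (fun n : ℕ => (scd n : ℝ) / 2 ^ (n * (n - 1))) atTop (𝓝 1) := by
  have h_bad : Tendsto (fun n : ℕ =>
      (Nat.card {D : Dgr n // ¬ ∀ u v, Reach D u v} : ℝ) / 2 ^ (n * (n - 1))) atTop (𝓝 0) :=
    squeeze_zero (fun _ => by positivity) (fun _ => card_not_stronglyConnected_div_le)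
      (tendsto_sum_choose_mul_pow_nhds_zero (by norm_num) (by norm_num))
  have h_compl (n : ℕ) : (scd n : ℝ) / 2 ^ (n * (n - 1)) =
      1 - (Nat.card {D : Dgr n // ¬ ∀ u v, Reach D u v} : ℝ) / 2 ^ (n * (n - 1)) := by
    rw [eq_sub_iff_add_eq, ← add_div, div_eq_one_iff_eq (by positivity)]
    exact_mod_cast scd_add_card_not_stronglyConnected
  simpa only [h_compl, sub_zero] using tendsto_const_nhds.sub h_bad

end Density

theorem tendsto_two_pow_mul_pow_div_factorial_atTop {r : ℝ} (hr : 0 < r) :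
    Tendsto (fun n : ℕ => (2 : ℝ) ^ (n * (n - 1)) * r ^ n / n.factorial) atTop atTop := by
  have h_small : ∀ᶠ n : ℕ in atTop, (n : ℝ) / 2 ^ n ≤ r / 4 := by
    simpa using (tendsto_pow_const_div_const_pow_of_one_lt 1 one_lt_two).eventually_le_const
      (by positivity : 0 < r / 4)
  refine tendsto_atTop_mono' atTop ?_ (tendsto_pow_atTop_atTop_of_one_lt one_lt_two)
  filter_upwards [h_small, eventually_ge_atTop 1] with n hn hn1
  have h_base : 2 * (n : ℝ) ≤ 2 ^ (n - 1) * r := by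
    have h2n : (2 : ℝ) ^ n = 2 * 2 ^ (n - 1) := by rw [← pow_succ']; congr 1; omega
    rw [div_le_iff₀ (by positivity), h2n] at hn
    linarith
  rw [le_div_iff₀ (by positivity)]
  calc (2 : ℝ) ^ n * n.factorial ≤ 2 ^ n * n ^ n := by gcongr; exact_mod_cast n.factorial_le_pow
    _ = (2 * n) ^ n := (mul_pow _ _ _).symm
    _ ≤ (2 ^ (n - 1) * r) ^ n := by gcongr
    _ = 2 ^ (n * (n - 1)) * r ^ n := by rw [mul_pow, ← pow_mul, mul_comm (n - 1)]

open Filter in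
theorem scd_egf_divergent_and_density_one :
    (∀ r : ℝ, 0 < r →
      ¬ Summable (fun n : ℕ => (scd n : ℝ) / (n.factorial : ℝ) * r ^ n)) ∧
    Tendsto (fun n : ℕ => (scd n : ℝ) / 2 ^ (n * (n - 1))) atTop (nhds 1) := by
  refine ⟨fun r hr hsum => ?_, tendsto_scd_div_two_pow⟩
  have h_terms : Tendsto (fun n : ℕ => (scd n : ℝ) / n.factorial * r ^ n) atTop atTop := by
    refine (tendsto_scd_div_two_pow.pos_mul_atTop one_pos
      (tendsto_two_pow_mul_pow_div_factorial_atTop hr)).congr fun n => ?_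
    field_simp
  exact not_tendsto_nhds_of_tendsto_atTop h_terms 0 hsum.tendsto_atTop_zero
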